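/- Let X ⊆ ℝ^d be finite and t > 0, and let T = {(p,q) : ∃ x ∈ X, dist(x,p) < t and q ∈ Vor(X,x)}. Then the map H : T × [0,1] → T, H((p,q),s) = (p,(1-s)q + sp), is a deformation retraction of T onto the set {(p,p) : ∃ x ∈ X, dist(x,p) < t}, and hence T is homotopy equivalent to the union of open balls ⋃_{x∈X} B(x,t). -/

import Mathlib

/-!
For `x, y ∈ X` the function `z ↦ dist x z ^ 2 - dist y z ^ 2` is affine. So if `q` lies in the
Voronoi cell of `x` and some `y` is at least as close as `x` to a point `r` strictly between `q`
and `p`, then `y` is also at least as close as `x` to `p`. Hence the point of `X` nearest to `r`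
is within `t` of `p`, which keeps the straight-line homotopy from `(p, q)` to `(p, p)` inside `T`.
At time `1` it lands on the diagonal, which `Prod.fst` identifies with the union of balls.
-/

open Metric

section Segment

variable {E : Type*} [NormedAddCommGroup E] [InnerProductSpace ℝ E]

lemma dist_sq_sub_dist_sq_convexCombo (x y p q : E) (s : ℝ) :
    dist x ((1 - s) • q + s • p) ^ 2 - dist y ((1 - s) • q + s • p) ^ 2 =
      (1 - s) * (dist x q ^ 2 - dist y q ^ 2) + s * (dist x p ^ 2 - dist y p ^ 2) := by
  simp only [dist_eq_norm, ← real_inner_self_eq_norm_sq, inner_sub_left, inner_sub_right,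
    inner_add_left, inner_add_right, real_inner_smul_left, real_inner_smul_right,
    real_inner_comm x, real_inner_comm y, real_inner_comm p q]
  ring

lemma dist_le_dist_of_le_at_convexCombo {x y p q : E} {s : ℝ} (hs : 0 < s) (hs1 : s ≤ 1)
    (hq : dist x q ≤ dist y q) (hr : dist y ((1 - s) • q + s • p) ≤ dist x ((1 - s) • q + s • p)) :
    dist y p ≤ dist x p := by
  have hq2 := pow_le_pow_left₀ dist_nonneg hq 2
  have hr2 := pow_le_pow_left₀ dist_nonneg hr 2
  have hcombo := dist_sq_sub_dist_sq_convexCombo x y p q s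
  have hp2 : dist y p ^ 2 ≤ dist x p ^ 2 := by
    nlinarith [mul_le_mul_of_nonneg_left hq2 (sub_nonneg.mpr hs1)]
  exact (pow_le_pow_iff_left₀ dist_nonneg dist_nonneg two_ne_zero).mp hp2

end Segment

section VoronoiCell

variable {E : Type*} [PseudoMetricSpace E] (X : Finset E) (t : ℝ)

def voronoiCell (x : E) : Set E := {q | ∀ y ∈ X, dist x q ≤ dist y q}

/-- The space `T` of the statement. -/
def voronoiThickening : Set (E × E) :=
  {pq | ∃ x ∈ X, dist x pq.1 < t ∧ pq.2 ∈ voronoiCell X x}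

variable {X t}

lemma exists_mem_voronoiCell_of_mem (q : E) {x : E} (hx : x ∈ X) :
    ∃ y ∈ X, dist y q ≤ dist x q ∧ q ∈ voronoiCell X y := by
  obtain ⟨y, hy, hmin⟩ := X.exists_min_image (fun z => dist z q) ⟨x, hx⟩
  exact ⟨y, hy, hmin x hx, hmin⟩

lemma fst_mem_iUnion_ball {pq : E × E} (h : pq ∈ voronoiThickening X t) :
    pq.1 ∈ ⋃ x ∈ X, ball x t := by
  obtain ⟨x, hx, hxp, -⟩ := h
  exact Set.mem_biUnion hx (mem_ball'.mpr hxp)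

lemma diag_mem_voronoiThickening {p : E} (h : p ∈ ⋃ x ∈ X, ball x t) :
    (p, p) ∈ voronoiThickening X t := by
  obtain ⟨x, hx, hxp⟩ := Set.mem_iUnion₂.mp h
  obtain ⟨y, hy, hyx, hcell⟩ := exists_mem_voronoiCell_of_mem p hx
  exact ⟨y, hy, hyx.trans_lt (mem_ball'.mp hxp), hcell⟩

end VoronoiCell

section Retraction

variable {E : Type*} [NormedAddCommGroup E] [InnerProductSpace ℝ E] {X : Finset E} {t : ℝ}

lemma convexCombo_mem_voronoiThickening {p q : E} {s : ℝ} (hs0 : 0 ≤ s) (hs1 : s ≤ 1)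
    (h : (p, q) ∈ voronoiThickening X t) :
    (p, (1 - s) • q + s • p) ∈ voronoiThickening X t := by
  obtain ⟨x, hx, hxp, hxq⟩ := h
  rcases hs0.eq_or_lt with rfl | hs
  · exact ⟨x, hx, hxp, by simpa using hxq⟩
  obtain ⟨y, hy, hyx, hcell⟩ := exists_mem_voronoiCell_of_mem ((1 - s) • q + s • p) hx
  exact ⟨y, hy, (dist_le_dist_of_le_at_convexCombo hs hs1 (hxq y hy) hyx).trans_lt hxp, hcell⟩

variable (X t)

def voronoiRetraction : C(voronoiThickening X t × Set.Icc (0 : ℝ) 1, voronoiThickening X t) where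
  toFun a := ⟨(a.1.1.1, (1 - (a.2 : ℝ)) • a.1.1.2 + (a.2 : ℝ) • a.1.1.1),
    convexCombo_mem_voronoiThickening a.2.2.1 a.2.2.2 a.1.2⟩
  continuous_toFun := by fun_prop

lemma voronoiRetraction_apply (a : voronoiThickening X t) (s : Set.Icc (0 : ℝ) 1) :
    (voronoiRetraction X t (a, s) : E × E) = (a.1.1, (1 - (s : ℝ)) • a.1.2 + (s : ℝ) • a.1.1) :=
  rfl

lemma voronoiRetraction_zero (a : voronoiThickening X t) : voronoiRetraction X t (a, 0) = a := by
  ext <;> simp [voronoiRetraction_apply]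

lemma voronoiRetraction_one (a : voronoiThickening X t) :
    (voronoiRetraction X t (a, 1) : E × E) = (a.1.1, a.1.1) := by
  simp [voronoiRetraction_apply]

lemma voronoiRetraction_of_fst_eq_snd (a : voronoiThickening X t) (s : Set.Icc (0 : ℝ) 1)
    (h : a.1.1 = a.1.2) : voronoiRetraction X t (a, s) = a := by
  ext
  · rfl
  · simp [voronoiRetraction_apply, h, ← add_smul]

def voronoiThickeningFst : C(voronoiThickening X t, ⋃ x ∈ X, ball x t) where
  toFun a := ⟨a.1.1, fst_mem_iUnion_ball a.2⟩

def iUnionBallDiag : C(⋃ x ∈ X, ball x t, voronoiThickening X t) where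
  toFun p := ⟨(p.1, p.1), diag_mem_voronoiThickening p.2⟩

def voronoiThickeningHomotopyEquiv :
    ContinuousMap.HomotopyEquiv (voronoiThickening X t) (⋃ x ∈ X, ball x t) where
  toFun := voronoiThickeningFst X t
  invFun := iUnionBallDiag X t
  left_inv := ⟨ContinuousMap.Homotopy.symm
    { toContinuousMap := (voronoiRetraction X t).comp ContinuousMap.prodSwap
      map_zero_left := voronoiRetraction_zero X t
      map_one_left := fun a => Subtype.ext (voronoiRetraction_one X t a) }⟩
  right_inv := .refl _

end Retraction

theorem stmt_17_general {d : ℕ} (X : Finset (EuclideanSpace ℝ (Fin d))) (t : ℝ)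
    (T : Set (EuclideanSpace ℝ (Fin d) × EuclideanSpace ℝ (Fin d)))
    (hT : T = {pq | ∃ x ∈ X, dist x pq.1 < t ∧ ∀ y ∈ X, dist x pq.2 ≤ dist y pq.2})
    (D : Set (EuclideanSpace ℝ (Fin d) × EuclideanSpace ℝ (Fin d)))
    (hD : D = {pq | pq.1 = pq.2 ∧ ∃ x ∈ X, dist x pq.1 < t}) :
    (∃ H : C(T × Set.Icc (0 : ℝ) 1, T),
      (∀ (a : T) (s : Set.Icc (0 : ℝ) 1),
        (H (a, s) : EuclideanSpace ℝ (Fin d) × EuclideanSpace ℝ (Fin d))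
          = ((a : EuclideanSpace ℝ (Fin d) × EuclideanSpace ℝ (Fin d)).1,
            (1 - (s : ℝ)) • (a : EuclideanSpace ℝ (Fin d) × EuclideanSpace ℝ (Fin d)).2
              + (s : ℝ) • (a : EuclideanSpace ℝ (Fin d) × EuclideanSpace ℝ (Fin d)).1)) ∧
      (∀ a : T, H (a, 0) = a) ∧
      (∀ a : T, (H (a, 1) : EuclideanSpace ℝ (Fin d) × EuclideanSpace ℝ (Fin d)) ∈ D) ∧
      (∀ (a : T) (s : Set.Icc (0 : ℝ) 1), (a : EuclideanSpace ℝ (Fin d) ×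
        EuclideanSpace ℝ (Fin d)) ∈ D → H (a, s) = a)) ∧
    Nonempty (ContinuousMap.HomotopyEquiv T (⋃ x ∈ X, Metric.ball x t)) := by
  obtain rfl : T = voronoiThickening X t := hT
  subst hD
  refine ⟨⟨voronoiRetraction X t, voronoiRetraction_apply X t, voronoiRetraction_zero X t,
    fun a => ?_, fun a s ha => voronoiRetraction_of_fst_eq_snd X t a s ha.1⟩,
    ⟨voronoiThickeningHomotopyEquiv X t⟩⟩
  obtain ⟨x, hx, hxp, -⟩ := a.2
  rw [voronoiRetraction_one]
  exact ⟨rfl, x, hx, hxp⟩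

/-- The homotopy `H((p,q),s) = (p, (1-s)q + sp)` is a deformation retraction of
`T = {(p,q) : ∃ x ∈ X, dist x p < t ∧ q ∈ Vor(X,x)}` onto the diagonal
`{(p,p) : ∃ x ∈ X, dist x p < t}`, and hence `T` is homotopy equivalent to the union of
open balls `⋃_{x ∈ X} B(x,t)`. -/
theorem stmt_17 {d : ℕ} (X : Finset (EuclideanSpace ℝ (Fin d))) (t : ℝ) (ht : 0 < t)
    (T : Set (EuclideanSpace ℝ (Fin d) × EuclideanSpace ℝ (Fin d)))
    (hT : T = {pq | ∃ x ∈ X, dist x pq.1 < t ∧ ∀ y ∈ X, dist x pq.2 ≤ dist y pq.2})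
    (D : Set (EuclideanSpace ℝ (Fin d) × EuclideanSpace ℝ (Fin d)))
    (hD : D = {pq | pq.1 = pq.2 ∧ ∃ x ∈ X, dist x pq.1 < t}) :
    (∃ H : C(T × Set.Icc (0 : ℝ) 1, T),
      (∀ (a : T) (s : Set.Icc (0 : ℝ) 1),
        (H (a, s) : EuclideanSpace ℝ (Fin d) × EuclideanSpace ℝ (Fin d))
          = ((a : EuclideanSpace ℝ (Fin d) × EuclideanSpace ℝ (Fin d)).1,
            (1 - (s : ℝ)) • (a : EuclideanSpace ℝ (Fin d) × EuclideanSpace ℝ (Fin d)).2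
              + (s : ℝ) • (a : EuclideanSpace ℝ (Fin d) × EuclideanSpace ℝ (Fin d)).1)) ∧
      (∀ a : T, H (a, 0) = a) ∧
      (∀ a : T, (H (a, 1) : EuclideanSpace ℝ (Fin d) × EuclideanSpace ℝ (Fin d)) ∈ D) ∧
      (∀ (a : T) (s : Set.Icc (0 : ℝ) 1), (a : EuclideanSpace ℝ (Fin d) ×
        EuclideanSpace ℝ (Fin d)) ∈ D → H (a, s) = a)) ∧
    Nonempty (ContinuousMap.HomotopyEquiv T (⋃ x ∈ X, Metric.ball x t)) :=
  stmt_17_general X t T hT D hD
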